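/- For all y in ℝ, the integral over t ∈ (0,1) of t^{-1/2} Φ(-|y|/√(1-t)) dt equals e^{-y²/2} - √(2π)·|y|·Φ(-|y|). -/

import Mathlib

open MeasureTheory Set

/-- The standard normal cumulative distribution function. -/
noncomputable def gaussCdf (x : ℝ) : ℝ :=
  (1 / Real.sqrt (2 * Real.pi)) * ∫ t in Set.Iio x, Real.exp (-t ^ 2 / 2)

open Real Filter Topology ProbabilityTheory

/-!
With `a = |y|`, the substitution `t = v² / (1 + v²)` turns the integral into
`2 ∫_0^∞ Φ(-a √(1 + v²)) (1 + v²)^(-3/2) dv`. Since `(1 + v²)^(-3/2)` is the derivative of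
`v / √(1 + v²)`, an integration by parts leaves
`a √(2/π) e^(-a²/2) ∫_0^∞ v² / (1 + v²) e^(-a²v²/2) dv`.
Writing `v² / (1 + v²) = 1 - 1 / (1 + v²)`, everything reduces to the classical identity
`∫_0^∞ e^(-a²v²/2) / (1 + v²) dv = π e^(a²/2) Φ(-a)`, which follows by writing `1 / (1 + v²)`
as an integral over an auxiliary variable `s > 1` and exchanging the order of integration.
-/

theorem gaussCdf_eq_cdf_gaussianReal (x : ℝ) : gaussCdf x = cdf (gaussianReal 0 1) x := by
  rw [cdf_eq_real, measureReal_def, gaussianReal_apply_eq_integral 0 one_ne_zero,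
    ENNReal.toReal_ofReal (integral_nonneg fun _ => gaussianPDFReal_nonneg _ _ _),
    integral_Iic_eq_integral_Iio, gaussCdf, ← integral_const_mul]
  simp [gaussianPDFReal_def]

theorem abs_gaussCdf_le_one (x : ℝ) : |gaussCdf x| ≤ 1 := by
  rw [gaussCdf_eq_cdf_gaussianReal, abs_of_nonneg (cdf_nonneg _ _)]
  exact cdf_le_one _ _

theorem tendsto_gaussCdf_atBot : Tendsto gaussCdf atBot (𝓝 0) :=
  (tendsto_cdf_atBot _).congr fun x => (gaussCdf_eq_cdf_gaussianReal x).symm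

theorem hasDerivAt_gaussCdf (x : ℝ) :
    HasDerivAt gaussCdf ((√(2 * π))⁻¹ * exp (-x ^ 2 / 2)) x := by
  have hφ : Integrable fun t : ℝ => exp (-t ^ 2 / 2) := by
    convert integrable_exp_neg_mul_sq (b := 1 / 2) (by norm_num) using 3
    ring
  have hF : gaussCdf = fun x => (√(2 * π))⁻¹ *
      ((∫ t in Iic 0, exp (-t ^ 2 / 2)) + ∫ t in (0 : ℝ)..x, exp (-t ^ 2 / 2)) := by
    ext x
    rw [gaussCdf, one_div, ← integral_Iic_eq_integral_Iio,
      ← intervalIntegral.integral_Iic_sub_Iic hφ.integrableOn hφ.integrableOn, add_sub_cancel]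
  rw [hF]
  exact ((intervalIntegral.integral_hasDerivAt_right hφ.intervalIntegrable
    (by fun_prop : Continuous _).aestronglyMeasurable.stronglyMeasurableAtFilter
    (by fun_prop : Continuous _).continuousAt).const_add _).const_mul _

theorem continuous_gaussCdf : Continuous gaussCdf :=
  continuous_iff_continuousAt.2 fun x => (hasDerivAt_gaussCdf x).continuousAt

theorem gaussCdf_neg (a : ℝ) :
    gaussCdf (-a) = (√(2 * π))⁻¹ * ∫ x in Ioi a, exp (-x ^ 2 / 2) := by
  rw [gaussCdf, one_div, ← integral_Iic_eq_integral_Iio, ← integral_comp_neg_Ioi]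
  simp

theorem gaussCdf_zero : gaussCdf 0 = 1 / 2 := by
  have h : ∫ x in Ioi (0 : ℝ), exp (-x ^ 2 / 2) = √(2 * π) / 2 := by
    convert integral_gaussian_Ioi (1 / 2) using 3 <;> ring_nf
  rw [← neg_zero, gaussCdf_neg, h]
  field_simp

theorem hasDerivAt_sq_div_one_add_sq (v : ℝ) :
    HasDerivAt (fun v : ℝ => v ^ 2 / (1 + v ^ 2)) (2 * v / (1 + v ^ 2) ^ 2) v := by
  have h1 : (1 + v ^ 2) ≠ 0 := by positivity
  refine ((hasDerivAt_pow 2 v).div ((hasDerivAt_pow 2 v).const_add 1) h1).congr_deriv ?_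
  field_simp
  ring

theorem image_sq_div_one_add_sq_Ioi_zero :
    (fun v : ℝ => v ^ 2 / (1 + v ^ 2)) '' Ioi 0 = Ioo 0 1 := by
  ext t
  constructor
  · rintro ⟨v, (hv : 0 < v), rfl⟩
    exact ⟨by positivity, (div_lt_one (by positivity)).2 (by linarith)⟩
  · rintro ⟨ht0, ht1⟩
    refine ⟨√(t / (1 - t)), sqrt_pos.2 (div_pos ht0 (by linarith)), ?_⟩
    simp only
    rw [sq_sqrt (div_pos ht0 (by linarith)).le]
    field_simp
    ring

theorem strictMonoOn_sq_div_one_add_sq :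
    StrictMonoOn (fun v : ℝ => v ^ 2 / (1 + v ^ 2)) (Ioi 0) := by
  intro x (hx : 0 < x) y _ hxy
  simp only
  rw [div_lt_div_iff₀ (by positivity) (by positivity)]
  nlinarith

theorem integral_Ioo_zero_one_eq_integral_Ioi {E : Type*} [NormedAddCommGroup E]
    [NormedSpace ℝ E] (f : ℝ → E) :
    ∫ t in Ioo (0 : ℝ) 1, f t =
      ∫ v in Ioi (0 : ℝ), (2 * v / (1 + v ^ 2) ^ 2) • f (v ^ 2 / (1 + v ^ 2)) := by
  rw [← image_sq_div_one_add_sq_Ioi_zero, integral_image_eq_integral_abs_deriv_smul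
    measurableSet_Ioi (fun v _ => (hasDerivAt_sq_div_one_add_sq v).hasDerivWithinAt)
    strictMonoOn_sq_div_one_add_sq.injOn]
  refine setIntegral_congr_fun measurableSet_Ioi fun v (hv : 0 < v) => ?_
  rw [abs_of_pos (by positivity)]

theorem hasDerivAt_div_sqrt_one_add_sq (v : ℝ) :
    HasDerivAt (fun v : ℝ => v / √(1 + v ^ 2)) (√(1 + v ^ 2) ^ 3)⁻¹ v := by
  have hpos : 0 < 1 + v ^ 2 := by positivity
  have hr : 0 < √(1 + v ^ 2) := sqrt_pos.2 hpos
  have hsqrt := ((hasDerivAt_pow 2 v).const_add 1).sqrt hpos.ne'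
  refine ((hasDerivAt_id v).div hsqrt hr.ne').congr_deriv ?_
  have hsq : √(1 + v ^ 2) ^ 2 = 1 + v ^ 2 := sq_sqrt hpos.le
  field_simp
  simp only [id, Nat.cast_ofNat, Nat.add_one_sub_one, pow_one]
  linear_combination 2 * hsq

theorem tendsto_div_sqrt_one_add_sq_atTop :
    Tendsto (fun v : ℝ => v / √(1 + v ^ 2)) atTop (𝓝 1) := by
  have h : Tendsto (fun v : ℝ => √((1 + (v ^ 2)⁻¹)⁻¹)) atTop (𝓝 1) := by
    have := ((tendsto_pow_atTop two_ne_zero).inv_tendsto_atTop.const_add 1).sqrt.inv₀ (by simp)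
    simpa using this
  refine h.congr' ?_
  filter_upwards [eventually_gt_atTop 0] with v hv
  have hsq : (1 + (v ^ 2)⁻¹)⁻¹ = (v / √(1 + v ^ 2)) ^ 2 := by
    rw [div_pow, sq_sqrt (by positivity)]
    field_simp
    ring
  rw [hsq, sqrt_sq (by positivity)]

theorem integral_Ioi_inv_sqrt_one_add_sq_pow_three :
    ∫ v in Ioi (0 : ℝ), (√(1 + v ^ 2) ^ 3)⁻¹ = 1 := by
  rw [integral_Ioi_of_hasDerivAt_of_nonneg'
    (fun v _ => hasDerivAt_div_sqrt_one_add_sq v) (fun v _ => by positivity)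
    tendsto_div_sqrt_one_add_sq_atTop]
  simp

theorem integrableOn_Ioi_inv_sqrt_one_add_sq_pow_three :
    IntegrableOn (fun v : ℝ => (√(1 + v ^ 2) ^ 3)⁻¹) (Ioi 0) :=
  integrableOn_Ioi_deriv_of_nonneg' (fun v _ => hasDerivAt_div_sqrt_one_add_sq v)
    (fun v _ => by positivity) tendsto_div_sqrt_one_add_sq_atTop

theorem integral_Ioo_inv_sqrt_mul_gaussCdf (a : ℝ) :
    ∫ t in Ioo (0 : ℝ) 1, (1 / √t) * gaussCdf (-(a / √(1 - t))) =
      2 * ∫ v in Ioi (0 : ℝ), gaussCdf (-(a * √(1 + v ^ 2))) * (√(1 + v ^ 2) ^ 3)⁻¹ := by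
  rw [integral_Ioo_zero_one_eq_integral_Ioi, ← integral_const_mul]
  refine setIntegral_congr_fun measurableSet_Ioi fun v (hv : 0 < v) => ?_
  have hpos : 0 < 1 + v ^ 2 := by positivity
  have hsq : √(1 + v ^ 2) ^ 2 = 1 + v ^ 2 := sq_sqrt hpos.le
  have hsqrt_t : √(v ^ 2 / (1 + v ^ 2)) = v / √(1 + v ^ 2) := by
    rw [sqrt_div (sq_nonneg v), sqrt_sq hv.le]
  have hsqrt_one_sub_t : √(1 - v ^ 2 / (1 + v ^ 2)) = (√(1 + v ^ 2))⁻¹ := by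
    rw [← sqrt_inv]
    congr 1
    field_simp
    ring
  rw [smul_eq_mul, hsqrt_t, hsqrt_one_sub_t, div_inv_eq_mul, mul_comm a]
  field_simp
  rw [show √(1 + v ^ 2) ^ 4 = (√(1 + v ^ 2) ^ 2) ^ 2 by ring, hsq]

theorem integrable_sq_div_one_add_sq_mul_exp_neg_mul_sq {b : ℝ} (hb : 0 < b) :
    Integrable fun v : ℝ => v ^ 2 / (1 + v ^ 2) * exp (-b * v ^ 2) := by
  refine (integrable_exp_neg_mul_sq hb).mono' (by fun_prop) (ae_of_all _ fun v => ?_)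
  rw [norm_mul, norm_of_nonneg (by positivity), norm_of_nonneg (by positivity)]
  exact mul_le_of_le_one_left (exp_pos _).le ((div_le_one (by positivity)).2 (by linarith))

theorem hasDerivAt_gaussCdf_neg_mul_sqrt_one_add_sq (a v : ℝ) :
    HasDerivAt (fun v => gaussCdf (-(a * √(1 + v ^ 2))))
      (-(a * (√(2 * π))⁻¹ * exp (-a ^ 2 / 2)) *
        (exp (-(a ^ 2 / 2) * v ^ 2) * (v / √(1 + v ^ 2)))) v := by
  have hsq : √(1 + v ^ 2) ^ 2 = 1 + v ^ 2 := sq_sqrt (by positivity)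
  refine (hasDerivAt_gaussCdf _).comp v ((((hasDerivAt_pow 2 v).const_add 1).sqrt
    (by positivity)).const_mul a).neg |>.congr_deriv ?_
  have hexp : exp (-(-(a * √(1 + v ^ 2))) ^ 2 / 2) =
      exp (-a ^ 2 / 2) * exp (-(a ^ 2 / 2) * v ^ 2) := by
    rw [← exp_add, neg_sq, mul_pow, hsq]
    ring_nf
  simp only [Pi.neg_apply, hexp]
  field_simp
  ring

theorem integral_Ioi_gaussCdf_neg_mul_sqrt_one_add_sq {a : ℝ} (ha : 0 < a) :
    ∫ v in Ioi (0 : ℝ), gaussCdf (-(a * √(1 + v ^ 2))) * (√(1 + v ^ 2) ^ 3)⁻¹ =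
      a * (√(2 * π))⁻¹ * exp (-a ^ 2 / 2) *
        ∫ v in Ioi (0 : ℝ), v ^ 2 / (1 + v ^ 2) * exp (-(a ^ 2 / 2) * v ^ 2) := by
  have hderiv := hasDerivAt_gaussCdf_neg_mul_sqrt_one_add_sq a
  set c := a * (√(2 * π))⁻¹ * exp (-a ^ 2 / 2)
  have hderiv_mul : ∀ v : ℝ, -c * (exp (-(a ^ 2 / 2) * v ^ 2) * (v / √(1 + v ^ 2))) *
      (v / √(1 + v ^ 2)) = -(c * (v ^ 2 / (1 + v ^ 2) * exp (-(a ^ 2 / 2) * v ^ 2))) := by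
    intro v
    have hsq : √(1 + v ^ 2) ^ 2 = 1 + v ^ 2 := sq_sqrt (by positivity)
    field_simp
    rw [hsq]
  have hint_left : IntegrableOn
      (fun v => gaussCdf (-(a * √(1 + v ^ 2))) * (√(1 + v ^ 2) ^ 3)⁻¹) (Ioi 0) :=
    integrableOn_Ioi_inv_sqrt_one_add_sq_pow_three.bdd_mul
      (continuous_gaussCdf.comp (by fun_prop)).aestronglyMeasurable
      (ae_of_all _ fun v => abs_gaussCdf_le_one _)
  have hint_right : IntegrableOn (fun v => -c * (exp (-(a ^ 2 / 2) * v ^ 2) *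
      (v / √(1 + v ^ 2))) * (v / √(1 + v ^ 2))) (Ioi 0) := by
    refine IntegrableOn.congr_fun ?_ (fun v _ => (hderiv_mul v).symm) measurableSet_Ioi
    exact ((integrable_sq_div_one_add_sq_mul_exp_neg_mul_sq (by positivity)).const_mul _).neg
      |>.integrableOn
  have hlim_zero : Tendsto (fun v => gaussCdf (-(a * √(1 + v ^ 2))) * (v / √(1 + v ^ 2)))
      (𝓝[>] 0) (𝓝 0) := by
    have : ContinuousAt (fun v => gaussCdf (-(a * √(1 + v ^ 2))) * (v / √(1 + v ^ 2))) 0 :=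
      (hderiv 0).continuousAt.mul (hasDerivAt_div_sqrt_one_add_sq 0).continuousAt
    simpa using this.tendsto.mono_left nhdsWithin_le_nhds
  have hlim_top : Tendsto (fun v => gaussCdf (-(a * √(1 + v ^ 2))) * (v / √(1 + v ^ 2)))
      atTop (𝓝 0) := by
    have hr : Tendsto (fun v : ℝ => √(1 + v ^ 2)) atTop atTop :=
      tendsto_sqrt_atTop.comp (tendsto_atTop_add_const_left _ _ (tendsto_pow_atTop two_ne_zero))
    simpa using (tendsto_gaussCdf_atBot.comp (tendsto_neg_atTop_atBot.comp
      (hr.const_mul_atTop ha))).mul tendsto_div_sqrt_one_add_sq_atTop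
  rw [integral_Ioi_mul_deriv_eq_deriv_mul (fun v _ => hderiv v)
    (fun v _ => hasDerivAt_div_sqrt_one_add_sq v) hint_left hint_right hlim_zero hlim_top]
  simp only [hderiv_mul, integral_neg, integral_const_mul]
  ring

theorem integrable_mul_exp_neg_mul_sq_sub_one {c : ℝ} (hc : 0 < c) :
    Integrable fun s : ℝ => s * exp (-c * (s ^ 2 - 1)) := by
  refine ((integrable_mul_exp_neg_mul_sq hc).const_mul (exp c)).congr (ae_of_all _ fun s => ?_)
  show exp c * (s * exp (-c * s ^ 2)) = s * exp (-c * (s ^ 2 - 1))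
  rw [mul_left_comm, ← exp_add]
  ring_nf

theorem integral_Ioi_one_mul_exp_neg_mul_sq_sub_one {c : ℝ} (hc : 0 < c) :
    ∫ s in Ioi 1, s * exp (-c * (s ^ 2 - 1)) = (2 * c)⁻¹ := by
  have hderiv : ∀ s ∈ Ici (1 : ℝ), HasDerivAt (fun s => -(2 * c)⁻¹ * exp (-c * (s ^ 2 - 1)))
      (s * exp (-c * (s ^ 2 - 1))) s := by
    intro s _
    refine ((((hasDerivAt_pow 2 s).sub_const 1).const_mul (-c)).exp.const_mul _).congr_deriv ?_
    field_simp
    ring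
  have hlim : Tendsto (fun s => -(2 * c)⁻¹ * exp (-c * (s ^ 2 - 1))) atTop (𝓝 0) := by
    have := tendsto_exp_atBot.comp ((tendsto_atTop_add_const_right _ (-1)
      (tendsto_pow_atTop two_ne_zero)).const_mul_atTop_of_neg (neg_lt_zero.2 hc))
    simpa [sub_eq_add_neg] using this.const_mul (-(2 * c)⁻¹)
  rw [integral_Ioi_of_hasDerivAt_of_tendsto' hderiv
    (integrable_mul_exp_neg_mul_sq_sub_one hc).integrableOn hlim]
  simp

theorem integral_Ioi_exp_neg_mul_sq_div_one_add_sq {a : ℝ} (ha : 0 < a) :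
    ∫ v in Ioi (0 : ℝ), exp (-(a ^ 2 / 2) * v ^ 2) / (1 + v ^ 2) =
      π * exp (a ^ 2 / 2) * gaussCdf (-a) := by
  have hb : 0 < a ^ 2 / 2 := by positivity
  -- `1 / (1 + v²) = a² ∫_1^∞ s e^(-a²(1 + v²)(s² - 1)/2) ds`; the factor `e^(-a²v²/2)` is
  -- absorbed so that the `v`-integral becomes Gaussian.
  set K : ℝ → ℝ → ℝ := fun v s =>
    a ^ 2 * (s * exp (-(a ^ 2 / 2) * (s ^ 2 - 1))) * exp (-(a ^ 2 / 2 * s ^ 2) * v ^ 2)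
  have hrepr : ∀ v ∈ Ioi (0 : ℝ), exp (-(a ^ 2 / 2) * v ^ 2) / (1 + v ^ 2) =
      ∫ s in Ioi 1, K v s := by
    intro v _
    have hK : ∀ s, K v s = a ^ 2 * exp (-(a ^ 2 / 2) * v ^ 2) *
        (s * exp (-(a ^ 2 / 2 * (1 + v ^ 2)) * (s ^ 2 - 1))) := by
      intro s
      simp only [K, mul_assoc, ← exp_add, mul_left_comm _ s]
      ring_nf
    simp only [hK, integral_const_mul, integral_Ioi_one_mul_exp_neg_mul_sq_sub_one
      (by positivity : 0 < a ^ 2 / 2 * (1 + v ^ 2))]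
    field_simp
  have hK_int : Integrable (Function.uncurry K)
      ((volume.restrict (Ioi 0)).prod (volume.restrict (Ioi 1))) := by
    refine Integrable.mono' ((integrable_exp_neg_mul_sq hb).integrableOn.mul_prod
      ((integrable_mul_exp_neg_mul_sq_sub_one hb).const_mul (a ^ 2)).integrableOn)
      (by fun_prop) ?_
    rw [Measure.prod_restrict, ae_restrict_iff' (measurableSet_Ioi.prod measurableSet_Ioi)]
    refine ae_of_all _ fun ⟨v, s⟩ ⟨(hv : 0 < v), (hs : 1 < s)⟩ => ?_
    simp only [Function.uncurry, K]
    rw [norm_of_nonneg (by positivity), mul_comm]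
    gcongr
    exact le_mul_of_one_le_right hb.le (one_le_pow₀ hs.le)
  have hinner : ∀ s ∈ Ioi (1 : ℝ), ∫ v in Ioi 0, K v s =
      a * √(2 * π) / 2 * exp (a ^ 2 / 2) * exp (-(a * s) ^ 2 / 2) := by
    intro s (hs : 1 < s)
    simp only [K]
    rw [integral_const_mul, integral_gaussian_Ioi, show π / (a ^ 2 / 2 * s ^ 2) =
      (√(2 * π) / (a * s)) ^ 2 by rw [div_pow, sq_sqrt (by positivity)]; field_simp,
      sqrt_sq (by positivity), show -(a ^ 2 / 2) * (s ^ 2 - 1) = a ^ 2 / 2 + -(a * s) ^ 2 / 2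
      by ring, exp_add]
    field_simp
  rw [setIntegral_congr_fun measurableSet_Ioi hrepr, integral_integral_swap hK_int,
    setIntegral_congr_fun measurableSet_Ioi hinner, integral_const_mul,
    integral_comp_mul_left_Ioi (fun x => exp (-x ^ 2 / 2)) 1 ha, mul_one, smul_eq_mul,
    gaussCdf_neg]
  have hsqrt : √(2 * π) ^ 2 = 2 * π := sq_sqrt (by positivity)
  field_simp
  rw [hsqrt]

theorem integral_Ioi_sq_div_one_add_sq_mul_exp_neg_mul_sq {a : ℝ} (ha : 0 < a) :
    ∫ v in Ioi (0 : ℝ), v ^ 2 / (1 + v ^ 2) * exp (-(a ^ 2 / 2) * v ^ 2) =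
      √(2 * π) / (2 * a) - π * exp (a ^ 2 / 2) * gaussCdf (-a) := by
  have hb : 0 < a ^ 2 / 2 := by positivity
  have hint := integrable_exp_neg_mul_sq hb
  have hint' : Integrable fun v : ℝ => exp (-(a ^ 2 / 2) * v ^ 2) / (1 + v ^ 2) :=
    hint.mono' ((by fun_prop : Continuous fun v : ℝ => exp (-(a ^ 2 / 2) * v ^ 2)).div
      (by fun_prop) fun v => by positivity).aestronglyMeasurable (ae_of_all _ fun v => by
      rw [norm_of_nonneg (by positivity)]
      exact div_le_self (exp_pos _).le (by nlinarith))
  have hgauss : ∫ v in Ioi (0 : ℝ), exp (-(a ^ 2 / 2) * v ^ 2) = √(2 * π) / (2 * a) := by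
    rw [integral_gaussian_Ioi, show π / (a ^ 2 / 2) = (√(2 * π) / a) ^ 2 by
      rw [div_pow, sq_sqrt (by positivity)]; field_simp, sqrt_sq (by positivity)]
    ring
  calc ∫ v in Ioi (0 : ℝ), v ^ 2 / (1 + v ^ 2) * exp (-(a ^ 2 / 2) * v ^ 2)
      = ∫ v in Ioi (0 : ℝ), (exp (-(a ^ 2 / 2) * v ^ 2) -
          exp (-(a ^ 2 / 2) * v ^ 2) / (1 + v ^ 2)) := by
        congr 1 with v
        field_simp
        ring
    _ = _ := by
      rw [integral_sub hint.integrableOn hint'.integrableOn, hgauss,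
        integral_Ioi_exp_neg_mul_sq_div_one_add_sq ha]

/-- For every `y ∈ ℝ`,
`∫_0^1 t^{-1/2} Φ(-|y|/√(1-t)) dt = e^{-y²/2} - √(2π)·|y|·Φ(-|y|)`. -/
theorem integral_rpow_gaussCdf (y : ℝ) :
    (∫ t in Set.Ioo (0 : ℝ) 1, (1 / Real.sqrt t) * gaussCdf (-(|y| / Real.sqrt (1 - t))))
      = Real.exp (-y ^ 2 / 2) - Real.sqrt (2 * Real.pi) * |y| * gaussCdf (-|y|) := by
  rw [integral_Ioo_inv_sqrt_mul_gaussCdf, ← sq_abs y]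
  rcases (abs_nonneg y).eq_or_lt with hy | hy
  · simp only [← hy, zero_mul, neg_zero, gaussCdf_zero, integral_const_mul,
      integral_Ioi_inv_sqrt_one_add_sq_pow_three]
    norm_num
  · rw [integral_Ioi_gaussCdf_neg_mul_sqrt_one_add_sq hy,
      integral_Ioi_sq_div_one_add_sq_mul_exp_neg_mul_sq hy]
    have hsqrt : √(2 * π) ^ 2 = 2 * π := sq_sqrt (by positivity)
    have hexp : exp (-(|y| ^ 2 / 2)) * exp (|y| ^ 2 / 2) = 1 := by
      rw [← exp_add, neg_add_cancel, exp_zero]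
    field_simp
    linear_combination (-2 * |y| * π * gaussCdf (-|y|)) * hexp + (|y| * gaussCdf (-|y|)) * hsqrt
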